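/- arXiv:2605.19920 — 2 statements merged into one kernel-verified Lean document; each statement's English description precedes it below -/
import Mathlib

section
/- Let V be a real inner product space, A : V × V × V → ℝ a trilinear map skew-symmetric in its first and third arguments, Δt > 0, and c, R_f⁻¹, R_m⁻¹ ≥ 0. Suppose uᵏ, uᵏ⁻¹, Bᵏ, Bᵏ⁻¹, ω̄, j̄, ū, H, f ∈ V satisfy: (i) ⟨(uᵏ - uᵏ⁻¹)/Δt, ū⟩ + R_f⁻¹‖ω̄‖² - c·A(j̄, H, ū) = ⟨f, ū⟩ with ū = (uᵏ⁻¹+uᵏ)/2, and (ii) ⟨(Bᵏ - Bᵏ⁻¹)/Δt, (Bᵏ⁻¹+Bᵏ)/2⟩ = -R_m⁻¹‖j̄‖² + A(ū, H, j̄). Then, with 𝓔ˡ := ½‖uˡ‖² + (c/2)‖Bˡ‖², one has (𝓔ᵏ - 𝓔ᵏ⁻¹)/Δt = -R_f⁻¹‖ω̄‖² - c·R_m⁻¹‖j̄‖² + ⟨f, ū⟩. -/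
open scoped RealInnerProductSpace

lemma midpoint_ident {V : Type*} [NormedAddCommGroup V] [InnerProductSpace ℝ V]
    (a b : V) : ⟪a - b, b + a⟫ = ‖a‖ ^ 2 - ‖b‖ ^ 2 := by
  rw [inner_sub_left, inner_add_right, inner_add_right,
    real_inner_self_eq_norm_sq, real_inner_self_eq_norm_sq, real_inner_comm a b]
  ring

/-- Fully discrete energy law of the leapfrog dual-field scheme. -/
theorem fully_discrete_energy_law
    {V : Type*} [NormedAddCommGroup V] [InnerProductSpace ℝ V]
    (A : V →ₗ[ℝ] V →ₗ[ℝ] V →ₗ[ℝ] ℝ)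
    (hskew : ∀ x y z : V, A x y z = -(A z y x))
    (Δt c Rfinv Rminv : ℝ) (hΔt : 0 < Δt)
    (hc : 0 ≤ c) (hRf : 0 ≤ Rfinv) (hRm : 0 ≤ Rminv)
    (uk ukm Bk Bkm ωb jb ub H f : V)
    (hub : ub = (2 : ℝ)⁻¹ • (ukm + uk))
    (hi : ⟪(Δt)⁻¹ • (uk - ukm), ub⟫ + Rfinv * ‖ωb‖ ^ 2
        - c * A jb H ub = ⟪f, ub⟫)
    (hii : ⟪(Δt)⁻¹ • (Bk - Bkm), (2 : ℝ)⁻¹ • (Bkm + Bk)⟫ =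
        -Rminv * ‖jb‖ ^ 2 + A ub H jb) :
    (((1 / 2) * ‖uk‖ ^ 2 + (c / 2) * ‖Bk‖ ^ 2)
      - ((1 / 2) * ‖ukm‖ ^ 2 + (c / 2) * ‖Bkm‖ ^ 2)) / Δt =
      -Rfinv * ‖ωb‖ ^ 2 - c * Rminv * ‖jb‖ ^ 2 + ⟪f, ub⟫ := by
  rw [hub] at hi
  rw [real_inner_smul_left, real_inner_smul_right, midpoint_ident] at hi
  rw [real_inner_smul_left, real_inner_smul_right, midpoint_ident] at hii
  have hA : A jb H ((2 : ℝ)⁻¹ • (ukm + uk)) = -(A ub H jb) := by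
    rw [hskew, hub]
  rw [hA] at hi
  have hfu : ⟪f, ub⟫ = ⟪f, (2 : ℝ)⁻¹ • (ukm + uk)⟫ := by rw [hub]
  rw [hfu]
  have h2 := congrArg (fun x => c * x) hii
  field_simp at hi hii ⊢
  nlinarith [hi, hii, mul_pos hΔt hΔt]
end

section
/- In the ideal case (R_f⁻¹ = R_m⁻¹ = 0 and f = 0), under the hypotheses of the fully discrete energy law, the discrete total energy is exactly conserved: 𝓔ᵏ = 𝓔ᵏ⁻¹ for all k. -/
open scoped RealInnerProductSpace

/-- Ideal case (`R_f⁻¹ = R_m⁻¹ = 0`, `f = 0`) of the fully discrete energy law: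
the discrete total energy is exactly conserved. -/
theorem fully_discrete_energy_conservation
    {V : Type*} [NormedAddCommGroup V] [InnerProductSpace ℝ V]
    (A : V →ₗ[ℝ] V →ₗ[ℝ] V →ₗ[ℝ] ℝ)
    (hskew : ∀ x y z : V, A x y z = -(A z y x))
    (Δt c : ℝ) (hΔt : 0 < Δt) (hc : 0 ≤ c)
    (uk ukm Bk Bkm jb ub H : V)
    (hub : ub = (2 : ℝ)⁻¹ • (ukm + uk))
    (hi : ⟪(Δt)⁻¹ • (uk - ukm), ub⟫ - c * A jb H ub = 0)
    (hii : ⟪(Δt)⁻¹ • (Bk - Bkm), (2 : ℝ)⁻¹ • (Bkm + Bk)⟫ = A ub H jb) :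
    (1 / 2) * ‖uk‖ ^ 2 + (c / 2) * ‖Bk‖ ^ 2 =
      (1 / 2) * ‖ukm‖ ^ 2 + (c / 2) * ‖Bkm‖ ^ 2 := by
  have key : ∀ a b : V, ⟪a - b, (2:ℝ)⁻¹ • (b + a)⟫ = (‖a‖^2 - ‖b‖^2)/2 := by
    intro a b
    rw [real_inner_smul_right, inner_sub_left, inner_add_right, inner_add_right,
      real_inner_self_eq_norm_sq, real_inner_self_eq_norm_sq, real_inner_comm b a]
    ring
  subst hub
  rw [real_inner_smul_left, key] at hi
  rw [real_inner_smul_left, key] at hii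
  have hs := hskew jb H ((2:ℝ)⁻¹ • (ukm + uk))
  have hΔ : Δt ≠ 0 := ne_of_gt hΔt
  have hsum : (Δt)⁻¹ * ((‖uk‖^2 - ‖ukm‖^2)/2 + c * ((‖Bk‖^2 - ‖Bkm‖^2)/2)) = 0 := by
    nlinarith [hi, hii, hs]
  have h0 : (‖uk‖^2 - ‖ukm‖^2)/2 + c * ((‖Bk‖^2 - ‖Bkm‖^2)/2) = 0 := by
    field_simp at hsum
    linarith
  linarith
end
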